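/- For any replacement rule satisfying Assumptions 1 (consistency of monoallelic states), 3 (coherence of individuals), and 4 (fair meiosis), and for every state x ∈ {0,1}^G, the RV-weighted change due to selection decomposes over individuals: Δ̂_sel(x) = Σ_{i∈I} X_i (W_i(x) − V_i), where X_i = (1/n_i) Σ_{g∈G_i} x_g, V_i = Σ_{g∈G_i} v_g, and W_i(x) = Σ_{g∈G_i} w_g(x). -/

import Mathlib

/-!
Common formal scaffold for "A mathematical formalism for natural selection
with arbitrary spatial and genetic structure" (Allen & McAvoy).

A population is a finite nonempty set `G` of genetic sites.  A state is a
subset of `G` (the set of sites occupied by allele `A`); `∅` is the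
monoallelic state `a` and `Finset.univ` is the monoallelic state `A`.
A replacement event is a pair `(R, α)` with `R ⊆ G` and `α : R → G`.
-/

open Filter Topology Set

namespace NatSel

variable (G : Type) [Fintype G] [DecidableEq G]

/-- A state of the population: the set of sites holding allele `A`. -/
abbrev PopState := Finset G

/-- A replacement event `(R, α)`: the replaced set `R ⊆ G` together with the
parentage map `α : R → G`. -/
abbrev RepEvent := Σ R : Finset G, (↥R → G)

variable {G}

/-- `x_g ∈ {0,1}` as a real number. -/
def xg (x : PopState G) (g : G) : ℝ := if g ∈ x then 1 else 0

/-- `α̃` : agrees with `α` on `R`, is the identity off `R`. -/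
def tildeMap (e : RepEvent G) (g : G) : G :=
  if h : g ∈ e.1 then e.2 ⟨g, h⟩ else g

/-- `p` is a replacement rule: for each state it gives a probability
distribution over replacement events. -/
def IsRule (p : PopState G → RepEvent G → ℝ) : Prop :=
  (∀ x e, 0 ≤ p x e) ∧ ∀ x, ∑ e : RepEvent G, p x e = 1

/-- The Fixation Axiom. -/
def FixationAxiom (p : PopState G → RepEvent G → ℝ) : Prop :=
  ∃ g : G, ∃ m : ℕ, 0 < m ∧ ∃ ev : Fin m → RepEvent G,
    (∀ k, ∀ x : PopState G, 0 < p x (ev k)) ∧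
    (∃ k, g ∈ (ev k).1) ∧
    (∀ h : G, (List.ofFn fun k => tildeMap (ev k)).foldr (· ∘ ·) id h = g)

/-- `e_{gh}(x)`: marginal probability that the allele in site `h` is replaced
by a copy of the allele in site `g`, in state `x`. -/
def eMarg (p : PopState G → RepEvent G → ℝ) (g h : G) (x : PopState G) : ℝ :=
  ∑ e : RepEvent G, if hh : h ∈ e.1 then (if e.2 ⟨h, hh⟩ = g then p x e else 0) else 0

/-- `b_g(x)`: expected offspring number (birth rate) of site `g` in state `x`. -/
def bRate (p : PopState G → RepEvent G → ℝ) (g : G) (x : PopState G) : ℝ :=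
  ∑ h, eMarg p g h x

/-- `d_g(x)`: death probability of site `g` in state `x`. -/
def dProb (p : PopState G → RepEvent G → ℝ) (g : G) (x : PopState G) : ℝ :=
  ∑ h, eMarg p h g x

/-- `b(x)`: total expected offspring number in state `x`. -/
def bTot (p : PopState G → RepEvent G → ℝ) (x : PopState G) : ℝ :=
  ∑ g, bRate p g x

/-- Probability that a replaced site whose parent holds allele `parent`
(`true` = `A`) acquires allele `child`, with mutation probability `u` and
mutational bias `ν`. -/
def siteProb (u ν : ℝ) (parent child : Bool) : ℝ :=
  (if child = parent then 1 - u else 0) + (if child = true then u * ν else u * (1 - ν))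

/-- One-step transition probability `P_{x → y}` of the evolutionary Markov
chain with replacement rule `p`, mutation probability `u`, mutational bias `ν`. -/
def step (p : PopState G → RepEvent G → ℝ) (u ν : ℝ) (x y : PopState G) : ℝ :=
  ∑ e : RepEvent G, p x e *
    (if y \ e.1 = x \ e.1 then
       ∏ g ∈ e.1.attach, siteProb u ν (decide (e.2 g ∈ x)) (decide (g.1 ∈ y))
     else 0)

/-- `t`-step transition probabilities of a kernel `P`. -/
def iterKer (P : PopState G → PopState G → ℝ) : ℕ → PopState G → PopState G → ℝ
  | 0, x, y => if x = y then 1 else 0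
  | (t + 1), x, y => ∑ z : PopState G, iterKer P t x z * P z y

/-- The state obtained from `x` by the (mutation-free) replacement event `e`. -/
def applyEvent (e : RepEvent G) (x : PopState G) : PopState G :=
  Finset.univ.filter fun g => tildeMap e g ∈ x

/-- One-step transition probability of the mutation-free (`u = 0`) chain. -/
def step0 (p : PopState G → RepEvent G → ℝ) (x y : PopState G) : ℝ :=
  ∑ e : RepEvent G, if y = applyEvent e x then p x e else 0

/-- The mutant appearance distribution `μ_A`: probability `d_g(a)/b(a)` on the
state `{g}`, for each `g ∈ G`. -/
noncomputable def muA (p : PopState G → RepEvent G → ℝ) (x : PopState G) : ℝ :=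
  ∑ g : G, if x = {g} then dProb p g ∅ / bTot p ∅ else 0

/-- The mutant appearance distribution `μ_a`: probability `d_g(A)/b(A)` on the
state `G \ {g}`, for each `g ∈ G`. -/
noncomputable def mua (p : PopState G → RepEvent G → ℝ) (x : PopState G) : ℝ :=
  ∑ g : G, if x = Finset.univ \ {g} then dProb p g Finset.univ / bTot p Finset.univ else 0

/-- Fixation probability `ρ_A` (computed at `u = 0`). -/
noncomputable def rhoA (p : PopState G → RepEvent G → ℝ) (ν : ℝ) : ℝ :=
  ∑ x : PopState G, muA p x *
    limUnder atTop (fun t => iterKer (step p 0 ν) t x Finset.univ)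

/-- Fixation probability `ρ_a` (computed at `u = 0`). -/
noncomputable def rhoa (p : PopState G → RepEvent G → ℝ) (ν : ℝ) : ℝ :=
  ∑ x : PopState G, mua p x *
    limUnder atTop (fun t => iterKer (step p 0 ν) t x ∅)

/-- Frequency `x = (1/n) Σ_g x_g` of allele `A`. -/
noncomputable def freq (x : PopState G) : ℝ := (x.card : ℝ) / (Fintype.card G : ℝ)

/-- Expected change due to selection, `Δ_sel(x) = Σ_g x_g (b_g(x) − d_g(x))`. -/
def deltaSel (p : PopState G → RepEvent G → ℝ) (x : PopState G) : ℝ :=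
  ∑ g, xg x g * (bRate p g x - dProb p g x)

/-- The finset of states other than the monoallelic states `a = ∅`, `A = univ`. -/
def offStates (G : Type) [Fintype G] [DecidableEq G] : Finset (PopState G) :=
  Finset.univ.filter fun x : PopState G => x ≠ ∅ ∧ x ≠ Finset.univ

/-- Assumption 1: consistency of monoallelic states. -/
def ConsistentMono (p : PopState G → RepEvent G → ℝ) : Prop :=
  ∀ e : RepEvent G, p ∅ e = p Finset.univ e

/-- A replacement rule represents neutral drift: probabilities are
state-independent. -/
def NeutralDrift (p : PopState G → RepEvent G → ℝ) : Prop :=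
  ∀ x e, p x e = p ∅ e

/-- Reproductive values: `{v_g}` solves `d°_g v_g = Σ_h e°_{gh} v_h` (with the
monoallelic-state quantities) together with `Σ_g v_g = n`. -/
def IsRepVal (p : PopState G → RepEvent G → ℝ) (v : G → ℝ) : Prop :=
  (∀ g, dProb p g ∅ * v g = ∑ h, eMarg p g h ∅ * v h) ∧
    ∑ g, v g = (Fintype.card G : ℝ)

/-- RV-weighted birth rate `b̂_g(x) = Σ_h e_{gh}(x) v_h`. -/
def bHat (p : PopState G → RepEvent G → ℝ) (v : G → ℝ) (g : G) (x : PopState G) : ℝ :=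
  ∑ h, eMarg p g h x * v h

/-- RV-weighted death rate `d̂_g(x) = v_g d_g(x)`. -/
def dHat (p : PopState G → RepEvent G → ℝ) (v : G → ℝ) (g : G) (x : PopState G) : ℝ :=
  v g * dProb p g x

/-- Total RV-weighted birth rate `b̂(x)`. -/
def bHatTot (p : PopState G → RepEvent G → ℝ) (v : G → ℝ) (x : PopState G) : ℝ :=
  ∑ g, bHat p v g x

/-- RV-weighted change due to selection `Δ̂_sel(x) = Σ_g x_g (b̂_g(x) − d̂_g(x))`. -/
def deltaHatSel (p : PopState G → RepEvent G → ℝ) (v : G → ℝ) (x : PopState G) : ℝ :=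
  ∑ g, xg x g * (bHat p v g x - dHat p v g x)

/-- Fitness `w_g(x) = v_g − d̂_g(x) + b̂_g(x)`. -/
def fitness (p : PopState G → RepEvent G → ℝ) (v : G → ℝ) (g : G) (x : PopState G) : ℝ :=
  v g - dHat p v g x + bHat p v g x

/-- RV-weighted frequency `x̂ = (1/n) Σ_g v_g x_g`. -/
noncomputable def freqHat (v : G → ℝ) (x : PopState G) : ℝ :=
  (∑ g, v g * xg x g) / (Fintype.card G : ℝ)

/-- `{π u}_{0<u≤1}` is, for each mutation probability `0 < u ≤ 1`, a stationary
distribution of the evolutionary Markov chain (i.e. the mutation-selection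
stationary distribution, which is unique by ergodicity). -/
def IsMSSFamily (p : PopState G → RepEvent G → ℝ) (ν : ℝ)
    (π : ℝ → PopState G → ℝ) : Prop :=
  ∀ u, u ∈ Set.Ioc (0 : ℝ) 1 →
    (∀ x, 0 ≤ π u x) ∧ (∑ x : PopState G, π u x = 1) ∧
      ∀ y, π u y = ∑ x : PopState G, π u x * step p u ν x y

/-- `πR` is the rare-mutation conditional (RMC) distribution associated with
the MSS family `π`: for each non-monoallelic state `x`,
`πR x = lim_{u→0} π_MSS(x)/(1 − π_MSS(A) − π_MSS(a))`. -/
def IsRMC (π : ℝ → PopState G → ℝ) (πR : PopState G → ℝ) : Prop :=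
  ∀ x ∈ offStates G,
    Tendsto (fun u => π u x / (1 - π u Finset.univ - π u ∅))
      (nhdsWithin 0 (Set.Ioi 0)) (nhds (πR x))

end NatSel

namespace NatSel

variable {G : Type} [Fintype G] [DecidableEq G]

/-- Assumption 3 (coherence of individuals): sites of the same individual are
replaced together.  Here `ind : G → I` assigns to each site its individual. -/
def Coherent {I : Type} (ind : G → I) (p : PopState G → RepEvent G → ℝ) : Prop :=
  ∀ g h : G, ind g = ind h →
    ∀ (x : PopState G) (e : RepEvent G), 0 < p x e → (g ∈ e.1 ↔ h ∈ e.1)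

/-- Assumption 4 (fair meiosis): two replacement events with the same replaced
set whose parentage maps agree at the level of individuals are equally likely. -/
def FairMeiosis {I : Type} (ind : G → I) (p : PopState G → RepEvent G → ℝ) : Prop :=
  ∀ e₁ e₂ : RepEvent G, ∀ heq : e₁.1 = e₂.1,
    (∀ g : ↥e₁.1, ind (e₁.2 g) = ind (e₂.2 ⟨g.1, heq ▸ g.2⟩)) →
    ∀ x : PopState G, p x e₁ = p x e₂

/-- The set `G_i` of sites of individual `i`. -/
def sitesOf {I : Type} [DecidableEq I] (ind : G → I) (i : I) : Finset G :=
  Finset.univ.filter fun g => ind g = i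

/-!
Within one individual, fair meiosis makes `e_{gh}(x)`, hence `b̂_g(x)`, the same for all its sites,
and coherence does the same for `d_g(x)`. Since the Fixation Axiom gives `d°_g > 0`, the equation
`d°_g v_g = Σ_h e°_{gh} v_h` then forces `v_g` to be constant on the individual as well. So
`w_g − v_g = b̂_g − d̂_g` is constant on each `G_i`, and `Σ_{g∈G_i} x_g c = X_i n_i c`.
-/

lemma _root_.Finset.sum_mul_eq_sum_div_card_mul_sum_of_const {α : Type*} (s : Finset α)
    (a c : α → ℝ) (hc : ∀ g ∈ s, ∀ g' ∈ s, c g = c g') :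
    ∑ g ∈ s, a g * c g = (∑ g ∈ s, a g) / (s.card : ℝ) * ∑ g ∈ s, c g := by
  rcases s.eq_empty_or_nonempty with rfl | ⟨g₀, hg₀⟩
  · simp
  have hcard : (s.card : ℝ) ≠ 0 := by exact_mod_cast (Finset.card_pos.2 ⟨g₀, hg₀⟩).ne'
  have hconst : ∀ g ∈ s, c g = c g₀ := fun g hg => hc g hg g₀ hg₀
  rw [Finset.sum_congr rfl fun g hg => congrArg (a g * ·) (hconst g hg), ← Finset.sum_mul,
    Finset.sum_congr rfl hconst, Finset.sum_const, nsmul_eq_mul]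
  field_simp

omit [DecidableEq G] in
lemma sum_mul_eq_sum_sitesOf_div_card_mul_sum {I : Type} [Fintype I] [DecidableEq I]
    (ind : G → I) (a c : G → ℝ) (hc : ∀ g g', ind g = ind g' → c g = c g') :
    ∑ g, a g * c g =
      ∑ i, (∑ g ∈ sitesOf ind i, a g) / ((sitesOf ind i).card : ℝ) *
        ∑ g ∈ sitesOf ind i, c g := by
  rw [← Finset.sum_fiberwise Finset.univ ind]
  refine Finset.sum_congr rfl fun i _ => ?_
  refine Finset.sum_mul_eq_sum_div_card_mul_sum_of_const _ a c fun g hg g' hg' => hc g g' ?_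
  rw [(Finset.mem_filter.1 hg).2, (Finset.mem_filter.1 hg').2]

lemma dProb_eq_sum (p : PopState G → RepEvent G → ℝ) (g : G) (x : PopState G) :
    dProb p g x = ∑ e : RepEvent G, if g ∈ e.1 then p x e else 0 := by
  unfold dProb eMarg
  rw [Finset.sum_comm]
  refine Finset.sum_congr rfl fun e _ => ?_
  by_cases hg : g ∈ e.1 <;> simp [hg]

lemma foldr_comp_apply_eq_self {α : Type} {a : α} :
    ∀ l : List (α → α), (∀ f ∈ l, f a = a) → l.foldr (· ∘ ·) id a = a
  | [], _ => rfl
  | f :: l, hl => by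
    rw [List.foldr_cons, Function.comp_apply,
      foldr_comp_apply_eq_self l fun f hf => hl f (List.mem_cons_of_mem _ hf),
      hl f List.mem_cons_self]

/-- If no event of the fixation sequence replaced `g`, their composition would fix `g`, so `g`
would be the common ancestor; but the ancestor is itself replaced by one of them. -/
lemma FixationAxiom.exists_forall_pos_mem {p : PopState G → RepEvent G → ℝ}
    (hfix : FixationAxiom p) (g : G) : ∃ e : RepEvent G, (∀ x, 0 < p x e) ∧ g ∈ e.1 := by
  obtain ⟨g₀, m, -, ev, hpos, ⟨k₀, hk₀⟩, hcomp⟩ := hfix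
  by_contra! hnot
  have hfixed : ∀ k, g ∉ (ev k).1 := fun k => hnot (ev k) (hpos k)
  have hg : g = g₀ := by
    rw [← hcomp g, foldr_comp_apply_eq_self]
    intro f hf
    obtain ⟨k, rfl⟩ := List.mem_ofFn.1 hf
    exact dif_neg (hfixed k)
  exact hfixed k₀ (hg ▸ hk₀)

lemma dProb_pos {p : PopState G → RepEvent G → ℝ} (hrule : IsRule p)
    (hfix : FixationAxiom p) (g : G) (x : PopState G) : 0 < dProb p g x := by
  obtain ⟨e, hpos, hg⟩ := hfix.exists_forall_pos_mem g
  rw [dProb_eq_sum]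
  calc 0 < p x e := hpos x
    _ = if g ∈ e.1 then p x e else 0 := (if_pos hg).symm
    _ ≤ ∑ e : RepEvent G, if g ∈ e.1 then p x e else 0 :=
      Finset.single_le_sum (f := fun e : RepEvent G => if g ∈ e.1 then p x e else 0)
        (fun e _ => by split_ifs <;> simp [hrule.1]) (Finset.mem_univ e)

section Individuals

variable {I : Type} {ind : G → I} {p : PopState G → RepEvent G → ℝ}

lemma dProb_eq_of_coherent (hrule : IsRule p) (hcoh : Coherent ind p) {g g' : G}
    (hgg : ind g = ind g') (x : PopState G) : dProb p g x = dProb p g' x := by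
  rw [dProb_eq_sum, dProb_eq_sum]
  refine Finset.sum_congr rfl fun e _ => ?_
  rcases (hrule.1 x e).lt_or_eq with hp | hp
  · simp only [hcoh g g' hgg x e hp]
  · simp [← hp]

/-- Composing every parentage map with the transposition of `g` and `g'` is a bijection of
replacement events that preserves probabilities and exchanges "parent is `g`" with
"parent is `g'`". -/
lemma eMarg_eq_of_fairMeiosis (hfair : FairMeiosis ind p) {g g' : G} (hgg : ind g = ind g')
    (h : G) (x : PopState G) : eMarg p g h x = eMarg p g' h x := by
  let σ : RepEvent G → RepEvent G := fun e => ⟨e.1, Equiv.swap g g' ∘ e.2⟩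
  have hσ : Function.Involutive σ := fun e => by simp [σ, Function.comp_def]
  have hind : ∀ y, ind (Equiv.swap g g' y) = ind y := by
    intro y
    rw [Equiv.swap_apply_def]
    split_ifs <;> simp only [*]
  have hp : ∀ e, p x (σ e) = p x e := fun e => hfair (σ e) e rfl (fun _ => hind _) x
  unfold eMarg
  rw [← Equiv.sum_comp (hσ.toPerm σ)]
  refine Finset.sum_congr rfl fun e _ => ?_
  change (if hh : h ∈ e.1 then (if Equiv.swap g g' (e.2 ⟨h, hh⟩) = g then p x (σ e) else 0)
    else 0) = _
  simp only [hp, Equiv.swap_apply_eq_iff, Equiv.swap_apply_left]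

lemma bHat_eq_of_fairMeiosis (hfair : FairMeiosis ind p) (v : G → ℝ) {g g' : G}
    (hgg : ind g = ind g') (x : PopState G) : bHat p v g x = bHat p v g' x :=
  Finset.sum_congr rfl fun h _ => by rw [eMarg_eq_of_fairMeiosis hfair hgg h x]

lemma IsRepVal.eq_of_ind (hrule : IsRule p) (hfix : FixationAxiom p) (hcoh : Coherent ind p)
    (hfair : FairMeiosis ind p) {v : G → ℝ} (hv : IsRepVal p v) {g g' : G}
    (hgg : ind g = ind g') : v g = v g' := by
  refine mul_left_cancel₀ (dProb_pos hrule hfix g ∅).ne' ?_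
  rw [hv.1 g, dProb_eq_of_coherent hrule hcoh hgg ∅, hv.1 g']
  exact bHat_eq_of_fairMeiosis hfair v hgg ∅

lemma fitness_sub_eq_of_ind (hrule : IsRule p) (hfix : FixationAxiom p)
    (hcoh : Coherent ind p) (hfair : FairMeiosis ind p) {v : G → ℝ} (hv : IsRepVal p v)
    {g g' : G} (hgg : ind g = ind g') (x : PopState G) :
    fitness p v g x - v g = fitness p v g' x - v g' := by
  simp only [fitness, dHat, bHat_eq_of_fairMeiosis hfair v hgg x,
    hv.eq_of_ind hrule hfix hcoh hfair hgg, dProb_eq_of_coherent hrule hcoh hgg x]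

end Individuals

theorem statement15_general
    {G : Type} [Fintype G] [DecidableEq G]
    {I : Type} [Fintype I] [DecidableEq I]
    (ind : G → I)
    (p : PopState G → RepEvent G → ℝ) (hrule : IsRule p) (hfix : FixationAxiom p)
    (hcoh : Coherent ind p) (hfair : FairMeiosis ind p)
    (v : G → ℝ) (hv : IsRepVal p v) :
    ∀ x : PopState G,
      deltaHatSel p v x =
        ∑ i : I,
          ((∑ g ∈ sitesOf ind i, xg x g) / ((sitesOf ind i).card : ℝ)) *
            ((∑ g ∈ sitesOf ind i, fitness p v g x) - ∑ g ∈ sitesOf ind i, v g) := by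
  intro x
  have hsel : deltaHatSel p v x = ∑ g, xg x g * (fitness p v g x - v g) := by
    refine Finset.sum_congr rfl fun g _ => ?_
    rw [fitness]
    ring
  simp only [hsel, ← Finset.sum_sub_distrib]
  exact sum_mul_eq_sum_sitesOf_div_card_mul_sum ind _ _ fun g g' hgg =>
    fitness_sub_eq_of_ind hrule hfix hcoh hfair hv hgg x

/-- Proposition 4 of Allen & McAvoy: under Assumptions 1, 3
and 4, the RV-weighted change due to selection decomposes over individuals:
`Δ̂_sel(x) = Σ_i X_i (W_i(x) − V_i)`, where `X_i` is the fraction of `A`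
alleles in individual `i`, `V_i` its reproductive value and `W_i(x)` its
fitness. -/
theorem statement15
    {G : Type} [Fintype G] [DecidableEq G] [Nonempty G]
    {I : Type} [Fintype I] [DecidableEq I]
    (ind : G → I) (hsurj : Function.Surjective ind)
    (p : PopState G → RepEvent G → ℝ) (hrule : IsRule p) (hfix : FixationAxiom p)
    (hcons : ConsistentMono p) (hcoh : Coherent ind p) (hfair : FairMeiosis ind p)
    (v : G → ℝ) (hv : IsRepVal p v) :
    ∀ x : PopState G,
      deltaHatSel p v x =
        ∑ i : I,
          ((∑ g ∈ sitesOf ind i, xg x g) / ((sitesOf ind i).card : ℝ)) *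
            ((∑ g ∈ sitesOf ind i, fitness p v g x) - ∑ g ∈ sitesOf ind i, v g) :=
  statement15_general ind p hrule hfix hcoh hfair v hv

end NatSel
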